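/- For every integer q ≥ 1 and ε ∈ ℝ, the Q-flow vector field v(x, y, z) = (∂ψ_q/∂y + ε·sin z, −∂ψ_q/∂x + ε·cos z, ψ_q(x, y)) is equivariant under the screw motion combining the rotation by θ = 2π/q about the z-axis with the shift z ↦ z − θ: if R denotes rotation of ℝ² by θ and Φ(x, y, z) = (R(x, y), z − θ), then for every point p ∈ ℝ³, v(Φ(p)) = (R(v₁(p), v₂(p)), v₃(p)) = DΦ(p)·v(p); that is, Φ maps orbits of the Q-flow to orbits. -/

import Mathlib

/-- The stream function of Zaslavsky's Q-flow:
`ψ_q(x, y) = Σ_{j=1}^{q} cos(x cos(2πj/q) + y sin(2πj/q))`. -/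
noncomputable def psi (q : ℕ) (x y : ℝ) : ℝ :=
  ∑ j ∈ Finset.Icc 1 q,
    Real.cos (x * Real.cos (2 * Real.pi * j / q) + y * Real.sin (2 * Real.pi * j / q))

/-! ψ_q is a sum of plane waves cos⟨p, e_j⟩ with wave vectors `e_j = (cos (2πj/q), sin (2πj/q))`,
and the rotation `R` by `θ = 2π/q` permutes them cyclically: `⟨R p, e_j⟩ = ⟨p, e_{j-1}⟩`. Reindexing
the sum therefore gives `ψ_q ∘ R = ψ_q`, and the same reindexing applied to the explicit partial
derivatives gives `∇ψ_q (R p) = R ∇ψ_q(p)`. The `ε`-terms rotate by the addition formulas for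
`sin (z - θ)` and `cos (z - θ)`. -/

open Real Finset

theorem Finset.sum_Icc_one_eq_sum_range {M : Type*} [AddCommMonoid M] (f : ℕ → M) (n : ℕ) :
    ∑ j ∈ Icc 1 n, f j = ∑ j ∈ range n, f (j + 1) := by
  rw [← Ico_add_one_right_eq_Icc, sum_Ico_eq_sum_range, add_tsub_cancel_right]
  simp only [add_comm 1]

theorem Function.Periodic.sum_Icc_sub_div {M : Type*} [AddCommMonoid M] {g : ℝ → M} {T : ℝ}
    (hg : Function.Periodic g T) (q : ℕ) :
    ∑ j ∈ Icc 1 q, g (T * j / q - T / q) = ∑ j ∈ Icc 1 q, g (T * j / q) := by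
  rcases q with _ | n
  · simp
  have hfull : g (T * (n + 1 : ℕ) / (n + 1 : ℕ)) = g (T * (0 : ℕ) / (n + 1 : ℕ)) := by
    rw [mul_div_cancel_right₀ _ (Nat.cast_ne_zero.mpr n.succ_ne_zero)]
    simpa using hg 0
  calc ∑ j ∈ Icc 1 (n + 1), g (T * j / (n + 1 : ℕ) - T / (n + 1 : ℕ))
      = ∑ j ∈ range (n + 1), g (T * j / (n + 1 : ℕ)) := by
        rw [sum_Icc_one_eq_sum_range]
        refine sum_congr rfl fun j _ ↦ congrArg g ?_
        push_cast
        ring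
    _ = ∑ j ∈ range n, g (T * (j + 1 : ℕ) / (n + 1 : ℕ)) + g (T * (0 : ℕ) / (n + 1 : ℕ)) :=
        sum_range_succ' _ _
    _ = ∑ j ∈ Icc 1 (n + 1), g (T * j / (n + 1 : ℕ)) := by
        rw [← hfull, sum_Icc_one_eq_sum_range, sum_range_succ]

theorem rotate_dot_cos_sin (x y θ α : ℝ) :
    (x * cos θ - y * sin θ) * cos α + (x * sin θ + y * cos θ) * sin α
      = x * cos (α - θ) + y * sin (α - θ) := by
  rw [cos_sub, sin_sub]; ring

theorem deriv_psi_fst (q : ℕ) (x y : ℝ) :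
    deriv (fun s ↦ psi q s y) x = -∑ j ∈ Icc 1 q,
      sin (x * cos (2 * π * j / q) + y * sin (2 * π * j / q)) * cos (2 * π * j / q) := by
  have h := HasDerivAt.fun_sum (u := Icc 1 q) fun (j : ℕ) _ ↦
    (((hasDerivAt_id x).mul_const (cos (2 * π * j / q))).add_const (y * sin (2 * π * j / q))).cos
  simpa [psi, sum_neg_distrib] using h.deriv

theorem deriv_psi_snd (q : ℕ) (x y : ℝ) :
    deriv (fun s ↦ psi q x s) y = -∑ j ∈ Icc 1 q,
      sin (x * cos (2 * π * j / q) + y * sin (2 * π * j / q)) * sin (2 * π * j / q) := by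
  have h := HasDerivAt.fun_sum (u := Icc 1 q) fun (j : ℕ) _ ↦
    (((hasDerivAt_id y).mul_const (sin (2 * π * j / q))).const_add (x * cos (2 * π * j / q))).cos
  simpa [psi, sum_neg_distrib] using h.deriv

theorem sum_rotate_dot_cos_sin_mul (q : ℕ) (x y : ℝ) (f w : ℝ → ℝ)
    (hw : Function.Periodic w (2 * π)) :
    ∑ j ∈ Icc 1 q, f ((x * cos (2 * π / q) - y * sin (2 * π / q)) * cos (2 * π * j / q)
        + (x * sin (2 * π / q) + y * cos (2 * π / q)) * sin (2 * π * j / q)) * w (2 * π * j / q)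
      = ∑ j ∈ Icc 1 q, f (x * cos (2 * π * j / q) + y * sin (2 * π * j / q))
          * w (2 * π * j / q + 2 * π / q) := by
  have hper : Function.Periodic
      (fun β ↦ f (x * cos β + y * sin β) * w (β + 2 * π / q)) (2 * π) := fun β ↦ by
    simp only [cos_add_two_pi, sin_add_two_pi, add_right_comm β (2 * π), hw (β + 2 * π / q)]
  simpa only [rotate_dot_cos_sin, sub_add_cancel] using hper.sum_Icc_sub_div q

theorem psi_rotate (q : ℕ) (x y : ℝ) :
    psi q (x * cos (2 * π / q) - y * sin (2 * π / q)) (x * sin (2 * π / q) + y * cos (2 * π / q))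
      = psi q x y := by
  simpa only [psi, mul_one] using sum_rotate_dot_cos_sin_mul q x y cos (fun _ ↦ 1) fun _ ↦ rfl

theorem deriv_psi_snd_rotate (q : ℕ) (x y : ℝ) :
    deriv (fun s ↦ psi q (x * cos (2 * π / q) - y * sin (2 * π / q)) s)
        (x * sin (2 * π / q) + y * cos (2 * π / q))
      = deriv (fun s ↦ psi q x s) y * cos (2 * π / q)
        + deriv (fun s ↦ psi q s y) x * sin (2 * π / q) := by
  rw [deriv_psi_snd, sum_rotate_dot_cos_sin_mul q x y sin sin sin_periodic, deriv_psi_snd,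
    deriv_psi_fst]
  simp only [sin_add, mul_add, sum_add_distrib, ← mul_assoc, ← sum_mul]
  ring

theorem deriv_psi_fst_rotate (q : ℕ) (x y : ℝ) :
    deriv (fun s ↦ psi q s (x * sin (2 * π / q) + y * cos (2 * π / q)))
        (x * cos (2 * π / q) - y * sin (2 * π / q))
      = deriv (fun s ↦ psi q s y) x * cos (2 * π / q)
        - deriv (fun s ↦ psi q x s) y * sin (2 * π / q) := by
  rw [deriv_psi_fst, sum_rotate_dot_cos_sin_mul q x y sin cos cos_periodic, deriv_psi_snd,
    deriv_psi_fst]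
  simp only [cos_add, mul_sub, sum_sub_distrib, ← mul_assoc, ← sum_mul]
  ring

theorem stmt14_general (q : ℕ) (ε : ℝ) (x y z : ℝ) :
    let θ := 2 * Real.pi / q
    let x' := x * Real.cos θ - y * Real.sin θ
    let y' := x * Real.sin θ + y * Real.cos θ
    let v1 := deriv (fun s => psi q x s) y + ε * Real.sin z
    let v2 := -(deriv (fun s => psi q s y) x) + ε * Real.cos z
    -- first component of v ∘ Φ equals first component of R(v₁, v₂)
    (deriv (fun s => psi q x' s) y' + ε * Real.sin (z - θ)
        = v1 * Real.cos θ - v2 * Real.sin θ) ∧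
    -- second component of v ∘ Φ equals second component of R(v₁, v₂)
    (-(deriv (fun s => psi q s y') x') + ε * Real.cos (z - θ)
        = v1 * Real.sin θ + v2 * Real.cos θ) ∧
    -- third component is invariant
    psi q x' y' = psi q x y := by
  intro θ x' y' v1 v2
  refine ⟨?_, ?_, psi_rotate q x y⟩
  · rw [deriv_psi_snd_rotate, sin_sub]
    ring
  · rw [deriv_psi_fst_rotate, cos_sub]
    ring

/-- For every integer `q ≥ 1` and `ε ∈ ℝ`, the Q-flow vector field
`v(x, y, z) = (∂ψ_q/∂y + ε sin z, −∂ψ_q/∂x + ε cos z, ψ_q)` is equivariant under the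
screw motion `Φ(x, y, z) = (R(x, y), z − θ)`, where `θ = 2π/q` and `R` is the rotation
of `ℝ²` by `θ`: at every point, `v(Φ(p)) = (R(v₁(p), v₂(p)), v₃(p)) = DΦ(p)·v(p)`,
stated componentwise. -/
theorem stmt14 (q : ℕ) (hq : 1 ≤ q) (ε : ℝ) (x y z : ℝ) :
    let θ := 2 * Real.pi / q
    let x' := x * Real.cos θ - y * Real.sin θ
    let y' := x * Real.sin θ + y * Real.cos θ
    let v1 := deriv (fun s => psi q x s) y + ε * Real.sin z
    let v2 := -(deriv (fun s => psi q s y) x) + ε * Real.cos z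
    -- first component of v ∘ Φ equals first component of R(v₁, v₂)
    (deriv (fun s => psi q x' s) y' + ε * Real.sin (z - θ)
        = v1 * Real.cos θ - v2 * Real.sin θ) ∧
    -- second component of v ∘ Φ equals second component of R(v₁, v₂)
    (-(deriv (fun s => psi q s y') x') + ε * Real.cos (z - θ)
        = v1 * Real.sin θ + v2 * Real.cos θ) ∧
    -- third component is invariant
    psi q x' y' = psi q x y :=
  stmt14_general q ε x y z
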